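/- Consider Local GD on a block starting at iteration t_c with τ ≥ 1 local steps and step size η > 0, and suppose 2m²n²η²τ²/d² ≤ 1/2. Then for every t with t_c ≤ t ≤ t_c + τ, the average deviation of the local models from the virtual average satisfies (1/K)·Σ_{i=1}^K ‖W^{(i)}(t) − W(t)‖_F² ≤ (8m³n³τ³η⁴/d³ + 2mnτη²/d)·Σ_{t'=t_c}^{t−1} Q(W(t')). -/

import Mathlib

open Finset

/-- Two-layer ReLU network: `f(W,v,x) = (1/√d) ∑_r v_r · max(⟨w_r, x⟩, 0)`. -/
noncomputable def nnf {m d : ℕ} (W : Matrix (Fin m) (Fin d) ℝ)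
    (v : Fin m → ℝ) (x : Fin d → ℝ) : ℝ :=
  (1 / Real.sqrt d) * ∑ r, v r * max (∑ j, W r j * x j) 0

/-- Formal gradient of the squared loss at one data point. -/
noncomputable def grad {m d : ℕ} (W : Matrix (Fin m) (Fin d) ℝ)
    (v : Fin m → ℝ) (x : Fin d → ℝ) (y : ℝ) : Matrix (Fin m) (Fin d) ℝ :=
  fun r j => (1 / Real.sqrt d) * (nnf W v x - y) * v r *
    (if 0 < ∑ k, W r k * x k then (1 : ℝ) else 0) * x j

/-- Squared Frobenius norm. -/
noncomputable def frobSq {m d : ℕ} (A : Matrix (Fin m) (Fin d) ℝ) : ℝ :=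
  ∑ r, ∑ j, (A r j) ^ 2

lemma frobSq_nonneg {m d : ℕ} (A : Matrix (Fin m) (Fin d) ℝ) : 0 ≤ frobSq A := by
  unfold frobSq; positivity

lemma frobSq_smul {m d : ℕ} (c : ℝ) (A : Matrix (Fin m) (Fin d) ℝ) :
    frobSq (c • A) = c ^ 2 * frobSq A := by
  unfold frobSq
  simp only [Matrix.smul_apply, smul_eq_mul, mul_pow, Finset.mul_sum]

lemma frobSq_sum_le {m d : ℕ} {ι : Type*} (s : Finset ι) (A : ι → Matrix (Fin m) (Fin d) ℝ) :
    frobSq (∑ x ∈ s, A x) ≤ s.card * ∑ x ∈ s, frobSq (A x) := by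
  unfold frobSq
  calc ∑ r, ∑ j, ((∑ x ∈ s, A x) r j) ^ 2
      = ∑ r, ∑ j, (∑ x ∈ s, A x r j) ^ 2 := by
        simp [Matrix.sum_apply]
    _ ≤ ∑ r, ∑ j, ((s.card : ℝ) * ∑ x ∈ s, (A x r j) ^ 2) := by
        refine Finset.sum_le_sum fun r _ => Finset.sum_le_sum fun j _ => ?_
        exact sq_sum_le_card_mul_sum_sq
    _ = (s.card : ℝ) * ∑ r : Fin m, ∑ j : Fin d, ∑ x ∈ s, (A x r j) ^ 2 := by
        simp_rw [← Finset.mul_sum]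
    _ = s.card * ∑ x ∈ s, ∑ r, ∑ j, (A x r j) ^ 2 := by
        congr 1
        calc ∑ r : Fin m, ∑ j : Fin d, ∑ x ∈ s, (A x r j) ^ 2
            = ∑ r : Fin m, ∑ x ∈ s, ∑ j : Fin d, (A x r j) ^ 2 :=
              Finset.sum_congr rfl fun r _ => Finset.sum_comm
          _ = ∑ x ∈ s, ∑ r : Fin m, ∑ j : Fin d, (A x r j) ^ 2 := Finset.sum_comm

lemma var_le {K : ℕ} (g : Fin K → ℝ) :
    ∑ i, (g i - (K : ℝ)⁻¹ * ∑ j, g j) ^ 2 ≤ ∑ i, (g i) ^ 2 := by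
  rcases Nat.eq_zero_or_pos K with h | h
  · subst h; simp
  have hKne : (K : ℝ) ≠ 0 := Nat.cast_ne_zero.mpr h.ne'
  have expand : ∀ i : Fin K, (g i - (K : ℝ)⁻¹ * ∑ j, g j) ^ 2
      = (g i) ^ 2 - 2 * (K : ℝ)⁻¹ * (∑ j, g j) * g i + ((K : ℝ)⁻¹ * ∑ j, g j) ^ 2 :=
    fun i => by ring
  simp_rw [expand]
  rw [Finset.sum_add_distrib, Finset.sum_sub_distrib, ← Finset.mul_sum, Finset.sum_const,
    Finset.card_fin, nsmul_eq_mul]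
  have e : (K : ℝ) * ((K : ℝ)⁻¹ * ∑ j, g j) ^ 2 = (K : ℝ)⁻¹ * (∑ j, g j) ^ 2 := by
    field_simp
  have h0 : 0 ≤ (K : ℝ)⁻¹ * (∑ j, g j) ^ 2 := by positivity
  nlinarith [h0]

lemma var_le_mat {K m d : ℕ} (A : Fin K → Matrix (Fin m) (Fin d) ℝ) :
    ∑ i, frobSq (A i - (K : ℝ)⁻¹ • ∑ j, A j) ≤ ∑ i, frobSq (A i) := by
  unfold frobSq
  have swap : ∀ f : Fin K → Fin m → Fin d → ℝ,
      ∑ i, ∑ r, ∑ k, f i r k = ∑ r, ∑ k, ∑ i, f i r k := by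
    intro f
    rw [Finset.sum_comm]
    exact Finset.sum_congr rfl fun r _ => Finset.sum_comm
  rw [swap, swap]
  refine Finset.sum_le_sum fun r _ => Finset.sum_le_sum fun k _ => ?_
  have := var_le (fun i => A i r k)
  simpa [Matrix.sub_apply, Matrix.smul_apply, Matrix.sum_apply, smul_eq_mul] using this

lemma grad_frobSq_le {m d : ℕ} (hd : 0 < d) (W : Matrix (Fin m) (Fin d) ℝ)
    (v : Fin m → ℝ) (hv : ∀ r, |v r| ≤ 1) (x : Fin d → ℝ) (hx : ∑ k, (x k) ^ 2 ≤ 1)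
    (y : ℝ) : frobSq (grad W v x y) ≤ (m : ℝ) / d * (nnf W v x - y) ^ 2 := by
  have hdpos : (0 : ℝ) < d := by exact_mod_cast hd
  have hds : (1 / Real.sqrt d) ^ 2 = 1 / (d : ℝ) := by
    rw [div_pow, one_pow, Real.sq_sqrt hdpos.le]
  unfold frobSq grad
  have key : ∀ r j, ((1 / Real.sqrt d) * (nnf W v x - y) * v r *
      (if 0 < ∑ k, W r k * x k then (1 : ℝ) else 0) * x j) ^ 2
      ≤ 1 / (d : ℝ) * (nnf W v x - y) ^ 2 * (x j) ^ 2 := by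
    intro r j
    have hvr : (v r) ^ 2 ≤ 1 := by
      have := hv r; nlinarith [abs_nonneg (v r), sq_abs (v r)]
    have hind : (if 0 < ∑ k, W r k * x k then (1 : ℝ) else 0) ^ 2 ≤ 1 := by
      split_ifs <;> norm_num
    have e1 : ((1 / Real.sqrt d) * (nnf W v x - y) * v r *
        (if 0 < ∑ k, W r k * x k then (1 : ℝ) else 0) * x j) ^ 2
        = ((v r) ^ 2 * (if 0 < ∑ k, W r k * x k then (1 : ℝ) else 0) ^ 2) *
          ((1 / Real.sqrt d) ^ 2 * (nnf W v x - y) ^ 2 * (x j) ^ 2) := by ring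
    rw [e1, hds]
    have h1 : (v r) ^ 2 * (if 0 < ∑ k, W r k * x k then (1 : ℝ) else 0) ^ 2 ≤ 1 := by
      nlinarith [sq_nonneg (v r), sq_nonneg (if 0 < ∑ k, W r k * x k then (1 : ℝ) else 0)]
    calc ((v r) ^ 2 * (if 0 < ∑ k, W r k * x k then (1 : ℝ) else 0) ^ 2) *
          (1 / (d : ℝ) * (nnf W v x - y) ^ 2 * (x j) ^ 2)
        ≤ 1 * (1 / (d : ℝ) * (nnf W v x - y) ^ 2 * (x j) ^ 2) :=
          mul_le_mul_of_nonneg_right h1 (by positivity)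
      _ = 1 / (d : ℝ) * (nnf W v x - y) ^ 2 * (x j) ^ 2 := one_mul _
  calc ∑ r, ∑ j, ((1 / Real.sqrt d) * (nnf W v x - y) * v r *
        (if 0 < ∑ k, W r k * x k then (1 : ℝ) else 0) * x j) ^ 2
      ≤ ∑ _r : Fin m, ∑ j, 1 / (d : ℝ) * (nnf W v x - y) ^ 2 * (x j) ^ 2 :=
        Finset.sum_le_sum fun r _ => Finset.sum_le_sum fun j _ => key r j
    _ = ∑ _r : Fin m, 1 / (d : ℝ) * (nnf W v x - y) ^ 2 * ∑ j, (x j) ^ 2 := by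
        simp_rw [← Finset.mul_sum]
    _ ≤ ∑ _r : Fin m, 1 / (d : ℝ) * (nnf W v x - y) ^ 2 * 1 :=
        Finset.sum_le_sum fun r _ => mul_le_mul_of_nonneg_left hx (by positivity)
    _ = (m : ℝ) / d * (nnf W v x - y) ^ 2 := by
        rw [Finset.sum_const, Finset.card_fin, nsmul_eq_mul]; ring

lemma nnf_lip {m d : ℕ} (hd : 0 < d) (W W' : Matrix (Fin m) (Fin d) ℝ)
    (v : Fin m → ℝ) (hv : ∀ r, |v r| ≤ 1) (x : Fin d → ℝ) (hx : ∑ k, (x k) ^ 2 ≤ 1) :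
    (nnf W v x - nnf W' v x) ^ 2 ≤ (m : ℝ) / d * frobSq (W - W') := by
  have hdpos : (0 : ℝ) < d := by exact_mod_cast hd
  have habs : |nnf W v x - nnf W' v x| ≤
      (1 / Real.sqrt d) * ∑ r, |∑ k, (W r k - W' r k) * x k| := by
    unfold nnf
    rw [← mul_sub, ← Finset.sum_sub_distrib, abs_mul,
      abs_of_pos (show (0:ℝ) < 1 / Real.sqrt d by positivity)]
    refine mul_le_mul_of_nonneg_left ?_ (by positivity)
    refine (Finset.abs_sum_le_sum_abs _ _).trans (Finset.sum_le_sum fun r _ => ?_)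
    rw [← mul_sub, abs_mul]
    have h2 : |max (∑ j, W r j * x j) 0 - max (∑ j, W' r j * x j) 0|
        ≤ |∑ j, W r j * x j - ∑ j, W' r j * x j| := abs_max_sub_max_le_abs _ _ _
    have h3 : ∑ j, W r j * x j - ∑ j, W' r j * x j = ∑ k, (W r k - W' r k) * x k := by
      rw [← Finset.sum_sub_distrib]; exact Finset.sum_congr rfl fun k _ => by ring
    calc |v r| * |max (∑ j, W r j * x j) 0 - max (∑ j, W' r j * x j) 0|
        ≤ 1 * |∑ j, W r j * x j - ∑ j, W' r j * x j| :=
          mul_le_mul (hv r) h2 (abs_nonneg _) zero_le_one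
      _ = |∑ k, (W r k - W' r k) * x k| := by rw [one_mul, h3]
  calc (nnf W v x - nnf W' v x) ^ 2 = |nnf W v x - nnf W' v x| ^ 2 := (sq_abs _).symm
    _ ≤ ((1 / Real.sqrt d) * ∑ r, |∑ k, (W r k - W' r k) * x k|) ^ 2 :=
        pow_le_pow_left₀ (abs_nonneg _) habs 2
    _ = 1 / (d : ℝ) * (∑ r, |∑ k, (W r k - W' r k) * x k|) ^ 2 := by
        rw [mul_pow, div_pow, one_pow, Real.sq_sqrt hdpos.le]
    _ ≤ 1 / (d : ℝ) * ((m : ℝ) * ∑ r, (∑ k, (W r k - W' r k) * x k) ^ 2) := by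
        refine mul_le_mul_of_nonneg_left ?_ (by positivity)
        have h := sq_sum_le_card_mul_sum_sq
          (s := (Finset.univ : Finset (Fin m))) (f := fun r => |∑ k, (W r k - W' r k) * x k|)
        simpa [sq_abs] using h
    _ ≤ 1 / (d : ℝ) * ((m : ℝ) * ∑ r, ∑ k, (W r k - W' r k) ^ 2) := by
        refine mul_le_mul_of_nonneg_left (mul_le_mul_of_nonneg_left
          (Finset.sum_le_sum fun r _ => ?_) (by positivity)) (by positivity)
        calc (∑ k, (W r k - W' r k) * x k) ^ 2
            ≤ (∑ k, (W r k - W' r k) ^ 2) * ∑ k, (x k) ^ 2 :=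
              Finset.sum_mul_sq_le_sq_mul_sq _ _ _
          _ ≤ (∑ k, (W r k - W' r k) ^ 2) * 1 :=
              mul_le_mul_of_nonneg_left hx (by positivity)
          _ = ∑ k, (W r k - W' r k) ^ 2 := mul_one _
    _ = (m : ℝ) / d * frobSq (W - W') := by
        unfold frobSq
        simp only [Matrix.sub_apply]
        ring
set_option maxHeartbeats 1600000 in
theorem stmt4 (m d n K : ℕ) (hm : 0 < m) (hd : 0 < d) (hn : 0 < n) (hK : 0 < K)
    (v : Fin m → ℝ) (hv : ∀ r, |v r| ≤ 1)
    (X : Fin K → Fin n → Fin d → ℝ) (Y : Fin K → Fin n → ℝ)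
    (hX : ∀ i j, Real.sqrt (∑ k, (X i j k) ^ 2) ≤ 1)
    (τ : ℕ) (hτ : 1 ≤ τ) (η : ℝ) (hη : 0 < η)
    (hsmall : 2 * (m : ℝ) ^ 2 * n ^ 2 * η ^ 2 * τ ^ 2 / d ^ 2 ≤ 1 / 2)
    (tc : ℕ)
    (W0 : Matrix (Fin m) (Fin d) ℝ) (Wloc : Fin K → ℕ → Matrix (Fin m) (Fin d) ℝ)
    (Wbar : ℕ → Matrix (Fin m) (Fin d) ℝ)
    (hinit : ∀ i, Wloc i tc = W0)
    (hupd : ∀ i, ∀ t, tc ≤ t → t < tc + τ →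
      Wloc i (t + 1) = Wloc i t - η • (∑ j, grad (Wloc i t) v (X i j) (Y i j)))
    (hbar : ∀ t, Wbar t = (K : ℝ)⁻¹ • ∑ i, Wloc i t)
    (t : ℕ) (ht1 : tc ≤ t) (ht2 : t ≤ tc + τ) :
    (1 / (K : ℝ)) * ∑ i, frobSq (Wloc i t - Wbar t) ≤
      (8 * (m : ℝ) ^ 3 * n ^ 3 * τ ^ 3 * η ^ 4 / d ^ 3 + 2 * m * n * τ * η ^ 2 / d) *
        ∑ t' ∈ Finset.Ico tc t,
          (1 / (K : ℝ)) * ∑ i, ∑ j, (nnf (Wbar t') v (X i j) - Y i j) ^ 2 := by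
  have hdpos : (0 : ℝ) < d := by exact_mod_cast hd
  have hKpos : (0 : ℝ) < K := by exact_mod_cast hK
  have hx2 : ∀ i j, ∑ k, (X i j k) ^ 2 ≤ 1 := by
    intro i j
    have h0 : (0 : ℝ) ≤ ∑ k, (X i j k) ^ 2 := by positivity
    nlinarith [Real.sq_sqrt h0, hX i j, Real.sqrt_nonneg (∑ k, (X i j k) ^ 2)]
  have hQnn : ∀ s, (0:ℝ) ≤ (1 / (K : ℝ)) * ∑ i, ∑ j, (nnf (Wbar s) v (X i j) - Y i j) ^ 2 := by
    intro s; positivity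
  -- evolution of the average
  have hbar_upd : ∀ s, tc ≤ s → s < tc + τ → Wbar (s + 1) =
      Wbar s - η • ((K : ℝ)⁻¹ • ∑ i, ∑ j, grad (Wloc i s) v (X i j) (Y i j)) := by
    intro s h1 h2
    rw [hbar (s + 1), hbar s]
    rw [Finset.sum_congr rfl (fun i _ => hupd i s h1 h2)]
    rw [Finset.sum_sub_distrib, smul_sub]
    congr 1
    rw [← Finset.smul_sum, smul_comm]
  -- deviation from the average as a sum of gradient differences
  have hdiff : ∀ s, tc ≤ s → s ≤ tc + τ → ∀ i,
      Wloc i s - Wbar s = (-η) • ∑ t' ∈ Finset.Ico tc s,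
        ((∑ j, grad (Wloc i t') v (X i j) (Y i j)) -
          (K : ℝ)⁻¹ • ∑ i', ∑ j, grad (Wloc i' t') v (X i' j) (Y i' j)) := by
    intro s hs1
    induction s, hs1 using Nat.le_induction with
    | base =>
      intro _ i
      have hWb : Wbar tc = W0 := by
        rw [hbar tc, Finset.sum_congr rfl fun i _ => hinit i, Finset.sum_const,
          Finset.card_fin, ← Nat.cast_smul_eq_nsmul ℝ, smul_smul,
          inv_mul_cancel₀ (ne_of_gt hKpos), one_smul]
      rw [hinit i, hWb, Finset.Ico_self, Finset.sum_empty, smul_zero, sub_self]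
    | succ s hs ih =>
      intro hs2 i
      have hslt : s < tc + τ := by omega
      have ihs := ih (by omega) i
      rw [hupd i s hs hslt, hbar_upd s hs hslt, Finset.sum_Ico_succ_top hs, smul_add, ← ihs]
      module
  -- per-time bound on the averaged gradient second moment
  have hstep : ∀ s : ℕ,
      (1 / (K : ℝ)) * ∑ i, frobSq (∑ j, grad (Wloc i s) v (X i j) (Y i j)) ≤
        2 * ((m : ℝ) * n / d) *
          ((1 / (K : ℝ)) * ∑ i, ∑ j, (nnf (Wbar s) v (X i j) - Y i j) ^ 2)
        + (2 * (m : ℝ) ^ 2 * n ^ 2 / d ^ 2) *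
          ((1 / (K : ℝ)) * ∑ i, frobSq (Wloc i s - Wbar s)) := by
    intro s
    have per_i : ∀ i, frobSq (∑ j, grad (Wloc i s) v (X i j) (Y i j)) ≤
        2 * ((m : ℝ) * n / d) * (∑ j, (nnf (Wbar s) v (X i j) - Y i j) ^ 2)
        + (2 * (m : ℝ) ^ 2 * n ^ 2 / d ^ 2) * frobSq (Wloc i s - Wbar s) := by
      intro i
      have h1 : frobSq (∑ j, grad (Wloc i s) v (X i j) (Y i j)) ≤
          (n : ℝ) * ∑ j, frobSq (grad (Wloc i s) v (X i j) (Y i j)) := by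
        have := frobSq_sum_le (Finset.univ : Finset (Fin n))
          (fun j => grad (Wloc i s) v (X i j) (Y i j))
        simpa using this
      have h3 : ∀ j : Fin n, (nnf (Wloc i s) v (X i j) - Y i j) ^ 2
          ≤ 2 * (nnf (Wbar s) v (X i j) - Y i j) ^ 2
            + 2 * ((m : ℝ) / d) * frobSq (Wloc i s - Wbar s) := by
        intro j
        have hl := nnf_lip hd (Wloc i s) (Wbar s) v hv (X i j) (hx2 i j)
        nlinarith [sq_nonneg (nnf (Wloc i s) v (X i j)
          - 2 * nnf (Wbar s) v (X i j) + Y i j)]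
      have h4 : ∑ j, (nnf (Wloc i s) v (X i j) - Y i j) ^ 2
          ≤ 2 * (∑ j, (nnf (Wbar s) v (X i j) - Y i j) ^ 2)
            + 2 * ((m : ℝ) * n / d) * frobSq (Wloc i s - Wbar s) := by
        calc ∑ j, (nnf (Wloc i s) v (X i j) - Y i j) ^ 2
            ≤ ∑ j : Fin n, (2 * (nnf (Wbar s) v (X i j) - Y i j) ^ 2
              + 2 * ((m : ℝ) / d) * frobSq (Wloc i s - Wbar s)) :=
              Finset.sum_le_sum fun j _ => h3 j
          _ = 2 * (∑ j, (nnf (Wbar s) v (X i j) - Y i j) ^ 2)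
              + 2 * ((m : ℝ) * n / d) * frobSq (Wloc i s - Wbar s) := by
              rw [Finset.sum_add_distrib, Finset.sum_const, Finset.card_fin, nsmul_eq_mul,
                ← Finset.mul_sum]
              ring
      calc frobSq (∑ j, grad (Wloc i s) v (X i j) (Y i j))
          ≤ (n : ℝ) * ∑ j, frobSq (grad (Wloc i s) v (X i j) (Y i j)) := h1
        _ ≤ (n : ℝ) * ((m : ℝ) / d * ∑ j, (nnf (Wloc i s) v (X i j) - Y i j) ^ 2) := by
            refine mul_le_mul_of_nonneg_left ?_ (by positivity)
            rw [Finset.mul_sum]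
            exact Finset.sum_le_sum fun j _ =>
              grad_frobSq_le hd _ v hv _ (hx2 i j) _
        _ ≤ (n : ℝ) * ((m : ℝ) / d * (2 * (∑ j, (nnf (Wbar s) v (X i j) - Y i j) ^ 2)
              + 2 * ((m : ℝ) * n / d) * frobSq (Wloc i s - Wbar s))) := by
            refine mul_le_mul_of_nonneg_left
              (mul_le_mul_of_nonneg_left h4 (by positivity)) (by positivity)
        _ = 2 * ((m : ℝ) * n / d) * (∑ j, (nnf (Wbar s) v (X i j) - Y i j) ^ 2)
            + (2 * (m : ℝ) ^ 2 * n ^ 2 / d ^ 2) * frobSq (Wloc i s - Wbar s) := by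
            field_simp
    calc (1 / (K : ℝ)) * ∑ i, frobSq (∑ j, grad (Wloc i s) v (X i j) (Y i j))
        ≤ (1 / (K : ℝ)) * ∑ i,
            (2 * ((m : ℝ) * n / d) * (∑ j, (nnf (Wbar s) v (X i j) - Y i j) ^ 2)
            + (2 * (m : ℝ) ^ 2 * n ^ 2 / d ^ 2) * frobSq (Wloc i s - Wbar s)) :=
          mul_le_mul_of_nonneg_left (Finset.sum_le_sum fun i _ => per_i i) (by positivity)
      _ = 2 * ((m : ℝ) * n / d) *
            ((1 / (K : ℝ)) * ∑ i, ∑ j, (nnf (Wbar s) v (X i j) - Y i j) ^ 2)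
          + (2 * (m : ℝ) ^ 2 * n ^ 2 / d ^ 2) *
            ((1 / (K : ℝ)) * ∑ i, frobSq (Wloc i s - Wbar s)) := by
          rw [Finset.sum_add_distrib, ← Finset.mul_sum, ← Finset.mul_sum, mul_add]
          ring
  -- deviation bound in terms of gradient second moments
  have hDsum : ∀ s, tc ≤ s → s ≤ tc + τ →
      (1 / (K : ℝ)) * ∑ i, frobSq (Wloc i s - Wbar s) ≤
        η ^ 2 * τ * ∑ t' ∈ Finset.Ico tc s,
          ((1 / (K : ℝ)) * ∑ i, frobSq (∑ j, grad (Wloc i t') v (X i j) (Y i j))) := by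
    intro s hs1 hs2
    have per_i : ∀ i, frobSq (Wloc i s - Wbar s) ≤
        η ^ 2 * τ * ∑ t' ∈ Finset.Ico tc s,
          frobSq ((∑ j, grad (Wloc i t') v (X i j) (Y i j)) -
            (K : ℝ)⁻¹ • ∑ i', ∑ j, grad (Wloc i' t') v (X i' j) (Y i' j)) := by
      intro i
      rw [hdiff s hs1 hs2 i, frobSq_smul]
      have hcard : (((Finset.Ico tc s).card) : ℝ) ≤ (τ : ℝ) := by
        rw [Nat.card_Ico]; exact_mod_cast (by omega : s - tc ≤ τ)
      have hnn : (0:ℝ) ≤ ∑ t' ∈ Finset.Ico tc s,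
          frobSq ((∑ j, grad (Wloc i t') v (X i j) (Y i j)) -
            (K : ℝ)⁻¹ • ∑ i', ∑ j, grad (Wloc i' t') v (X i' j) (Y i' j)) :=
        Finset.sum_nonneg fun t' _ => frobSq_nonneg _
      calc (-η) ^ 2 * frobSq (∑ t' ∈ Finset.Ico tc s,
            ((∑ j, grad (Wloc i t') v (X i j) (Y i j)) -
              (K : ℝ)⁻¹ • ∑ i', ∑ j, grad (Wloc i' t') v (X i' j) (Y i' j)))
          ≤ (-η) ^ 2 * ((((Finset.Ico tc s).card) : ℝ) * ∑ t' ∈ Finset.Ico tc s,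
              frobSq ((∑ j, grad (Wloc i t') v (X i j) (Y i j)) -
                (K : ℝ)⁻¹ • ∑ i', ∑ j, grad (Wloc i' t') v (X i' j) (Y i' j))) :=
            mul_le_mul_of_nonneg_left (frobSq_sum_le _ _) (by positivity)
        _ ≤ η ^ 2 * ((τ : ℝ) * ∑ t' ∈ Finset.Ico tc s,
              frobSq ((∑ j, grad (Wloc i t') v (X i j) (Y i j)) -
                (K : ℝ)⁻¹ • ∑ i', ∑ j, grad (Wloc i' t') v (X i' j) (Y i' j))) := by
            rw [show (-η) ^ 2 = η ^ 2 by ring]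
            exact mul_le_mul_of_nonneg_left (mul_le_mul_of_nonneg_right hcard hnn)
              (by positivity)
        _ = η ^ 2 * τ * ∑ t' ∈ Finset.Ico tc s,
              frobSq ((∑ j, grad (Wloc i t') v (X i j) (Y i j)) -
                (K : ℝ)⁻¹ • ∑ i', ∑ j, grad (Wloc i' t') v (X i' j) (Y i' j)) := by ring
    calc (1 / (K : ℝ)) * ∑ i, frobSq (Wloc i s - Wbar s)
        ≤ (1 / (K : ℝ)) * ∑ i, (η ^ 2 * τ * ∑ t' ∈ Finset.Ico tc s,
            frobSq ((∑ j, grad (Wloc i t') v (X i j) (Y i j)) -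
              (K : ℝ)⁻¹ • ∑ i', ∑ j, grad (Wloc i' t') v (X i' j) (Y i' j))) :=
          mul_le_mul_of_nonneg_left (Finset.sum_le_sum fun i _ => per_i i) (by positivity)
      _ = η ^ 2 * τ * ∑ t' ∈ Finset.Ico tc s, ((1 / (K : ℝ)) * ∑ i,
            frobSq ((∑ j, grad (Wloc i t') v (X i j) (Y i j)) -
              (K : ℝ)⁻¹ • ∑ i', ∑ j, grad (Wloc i' t') v (X i' j) (Y i' j))) := by
          simp_rw [← Finset.mul_sum]
          rw [Finset.sum_comm]
          ring
      _ ≤ η ^ 2 * τ * ∑ t' ∈ Finset.Ico tc s, ((1 / (K : ℝ)) * ∑ i,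
            frobSq (∑ j, grad (Wloc i t') v (X i j) (Y i j))) := by
          refine mul_le_mul_of_nonneg_left (Finset.sum_le_sum fun t' _ =>
            mul_le_mul_of_nonneg_left ?_ (by positivity)) (by positivity)
          exact var_le_mat (fun i' => ∑ j, grad (Wloc i' t') v (X i' j) (Y i' j))
  -- main induction
  have main : ∀ s, tc ≤ s → s ≤ tc + τ →
      (1 / (K : ℝ)) * ∑ i, frobSq (Wloc i s - Wbar s) ≤
        (8 * (m : ℝ) ^ 3 * n ^ 3 * τ ^ 3 * η ^ 4 / d ^ 3 + 2 * m * n * τ * η ^ 2 / d) *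
          ∑ t' ∈ Finset.Ico tc s,
            (1 / (K : ℝ)) * ∑ i, ∑ j, (nnf (Wbar t') v (X i j) - Y i j) ^ 2 := by
    intro s
    induction s using Nat.strong_induction_on with
    | _ s ih =>
    intro hs1 hs2
    set C : ℝ := 8 * (m : ℝ) ^ 3 * n ^ 3 * τ ^ 3 * η ^ 4 / d ^ 3 + 2 * m * n * τ * η ^ 2 / d
      with hC
    have hC0 : (0:ℝ) ≤ C := by rw [hC]; positivity
    set S : ℝ := ∑ t' ∈ Finset.Ico tc s,
      (1 / (K : ℝ)) * ∑ i, ∑ j, (nnf (Wbar t') v (X i j) - Y i j) ^ 2 with hS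
    have hS0 : (0:ℝ) ≤ S := Finset.sum_nonneg fun t' _ => hQnn t'
    have hmono : ∀ t' ∈ Finset.Ico tc s,
        (∑ u ∈ Finset.Ico tc t',
          (1 / (K : ℝ)) * ∑ i, ∑ j, (nnf (Wbar u) v (X i j) - Y i j) ^ 2) ≤ S := by
      intro t' ht'
      refine Finset.sum_le_sum_of_subset_of_nonneg ?_ (fun u _ _ => hQnn u)
      exact Finset.Ico_subset_Ico le_rfl (le_of_lt (Finset.mem_Ico.mp ht').2)
    have hihD : ∀ t' ∈ Finset.Ico tc s,
        (1 / (K : ℝ)) * ∑ i, frobSq (Wloc i t' - Wbar t') ≤ C * S := by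
      intro t' ht'
      obtain ⟨h1, h2⟩ := Finset.mem_Ico.mp ht'
      exact (ih t' h2 h1 (by omega)).trans
        (mul_le_mul_of_nonneg_left (hmono t' ht') hC0)
    have hcard : (((Finset.Ico tc s).card) : ℝ) ≤ (τ : ℝ) := by
      rw [Nat.card_Ico]; exact_mod_cast (by omega : s - tc ≤ τ)
    have step2 : ∑ t' ∈ Finset.Ico tc s,
        ((1 / (K : ℝ)) * ∑ i, frobSq (∑ j, grad (Wloc i t') v (X i j) (Y i j))) ≤
        2 * ((m : ℝ) * n / d) * S
          + (2 * (m : ℝ) ^ 2 * n ^ 2 / d ^ 2) * ((τ : ℝ) * (C * S)) := by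
      calc ∑ t' ∈ Finset.Ico tc s,
            ((1 / (K : ℝ)) * ∑ i, frobSq (∑ j, grad (Wloc i t') v (X i j) (Y i j)))
          ≤ ∑ t' ∈ Finset.Ico tc s,
            (2 * ((m : ℝ) * n / d) *
              ((1 / (K : ℝ)) * ∑ i, ∑ j, (nnf (Wbar t') v (X i j) - Y i j) ^ 2)
            + (2 * (m : ℝ) ^ 2 * n ^ 2 / d ^ 2) * (C * S)) := by
            refine Finset.sum_le_sum fun t' ht' => (hstep t').trans ?_
            exact add_le_add le_rfl
              (mul_le_mul_of_nonneg_left (hihD t' ht') (by positivity))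
        _ = 2 * ((m : ℝ) * n / d) * S
            + (((Finset.Ico tc s).card) : ℝ) *
              ((2 * (m : ℝ) ^ 2 * n ^ 2 / d ^ 2) * (C * S)) := by
            rw [Finset.sum_add_distrib, ← Finset.mul_sum, Finset.sum_const, nsmul_eq_mul, hS]
        _ ≤ 2 * ((m : ℝ) * n / d) * S
            + (τ : ℝ) * ((2 * (m : ℝ) ^ 2 * n ^ 2 / d ^ 2) * (C * S)) := by
            have : (0:ℝ) ≤ (2 * (m : ℝ) ^ 2 * n ^ 2 / d ^ 2) * (C * S) := by positivity
            nlinarith [hcard]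
        _ = 2 * ((m : ℝ) * n / d) * S
            + (2 * (m : ℝ) ^ 2 * n ^ 2 / d ^ 2) * ((τ : ℝ) * (C * S)) := by ring
    have chain := (hDsum s hs1 hs2).trans
      (mul_le_mul_of_nonneg_left step2 (by positivity))
    -- final arithmetic
    set a : ℝ := (m : ℝ) * n * η ^ 2 * τ / d with ha
    set b : ℝ := 2 * (m : ℝ) ^ 2 * n ^ 2 * η ^ 2 * τ ^ 2 / d ^ 2 with hb
    have ha0 : (0:ℝ) ≤ a := by rw [ha]; positivity
    have hb0 : (0:ℝ) ≤ b := by rw [hb]; positivity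
    have hbhalf : b ≤ 1 / 2 := hsmall
    have hCab : C = 2 * a + 4 * a * b := by
      rw [hC, ha, hb]; field_simp; ring
    have hLHS : η ^ 2 * τ * (2 * ((m : ℝ) * n / d) * S
        + (2 * (m : ℝ) ^ 2 * n ^ 2 / d ^ 2) * ((τ : ℝ) * (C * S)))
        = 2 * a * S + b * (C * S) := by
      rw [ha, hb]; field_simp
    rw [hLHS] at chain
    refine chain.trans ?_
    rw [hCab]
    nlinarith [mul_nonneg (mul_nonneg ha0 hb0) hS0, hS0, ha0, hb0, hbhalf,
      mul_nonneg ha0 hS0]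
  exact main t ht1 ht2
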